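/- Strong Sperner's lemma for the triangle: in any Sperner labeling of a triangulated triangle, the number of small triangles exhibiting all three labels is odd. -/

import Mathlib

open scoped Classical

/-- The `i`-th vertex `e_i` of the standard simplex in `ℝ^N`. -/
noncomputable def vtx (N : ℕ) (i : Fin N) : Fin N → ℝ := fun j => if j = i then 1 else 0

/-- The face of the standard simplex supported on the index set `S`. -/
def simFace (N : ℕ) (S : Finset (Fin N)) : Set (Fin N → ℝ) :=
  {x ∈ stdSimplex ℝ (Fin N) | ∀ i ∉ S, x i = 0}

/-- A triangulation of the standard simplex `Δ = stdSimplex ℝ (Fin N)` (an `(N-1)`-simplex):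
a finite family of `N`-element affinely independent vertex sets whose convex hulls cover `Δ`
and meet face-to-face. -/
structure Triangulation (N : ℕ) where
  facets : Finset (Finset (Fin N → ℝ))
  card_eq : ∀ σ ∈ facets, σ.card = N
  indep : ∀ σ ∈ facets, AffineIndependent ℝ (fun v : {x // x ∈ σ} => (v : Fin N → ℝ))
  covers : (⋃ σ ∈ facets, convexHull ℝ (σ : Set (Fin N → ℝ))) = stdSimplex ℝ (Fin N)
  faceToFace : ∀ σ ∈ facets, ∀ σ' ∈ facets,
    convexHull ℝ (σ : Set (Fin N → ℝ)) ∩ convexHull ℝ (σ' : Set (Fin N → ℝ))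
      = convexHull ℝ ((σ ∩ σ' : Finset (Fin N → ℝ)) : Set (Fin N → ℝ))

/-- The vertex set of a triangulation. -/
noncomputable def Triangulation.vertices {N : ℕ} (T : Triangulation N) :
    Finset (Fin N → ℝ) :=
  T.facets.biUnion id

/-- A Sperner labeling: each vertex `v` receives a label `ℓ v` lying in the support of `v`,
i.e. a vertex lying in the face `conv{e_i : i ∈ S}` is labeled by an element of `S`
(in particular `e_i` is labeled `i`). -/
def IsSperner {N : ℕ} (T : Triangulation N) (ℓ : (Fin N → ℝ) → Fin N) : Prop :=
  ∀ v ∈ T.vertices, v (ℓ v) ≠ 0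

/-!
Call an edge labelled `{0, 1}` a door. A triangle has an odd number of doors iff it is fully
labelled, so the number of fully labelled triangles has the parity of the number of incidences
(triangle, door). An edge lies in two triangles, unless it lies on the boundary, where it lies in
one; a door on the boundary must lie on the side `x 2 = 0` by the Sperner condition. So the
parity is that of the number of doors on this side. Counting the incidences (edge of this side,
vertex labelled `0`) the same way, `vtx 3 0` lies in one such edge and every other vertex of the
side in two, so this number is odd.

The geometric input is that facets meet face-to-face, so two triangles sharing an edge lie on
opposite sides of it, and that the facets are closed and cover the simplex, which produces the
second triangle at an interior edge and the neighbours of a vertex along the side.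
-/

open Finset Filter Topology

local notation "ℝ³" => Fin 3 → ℝ

theorem Finset.odd_card_odd_bipartiteAbove_iff (r : α → β → Prop) [∀ a b, Decidable (r a b)]
    (s : Finset α) (t : Finset β) :
    Odd #{a ∈ s | Odd #(t.bipartiteAbove r a)} ↔ Odd #{b ∈ t | Odd #(s.bipartiteBelow r b)} := by
  rw [← odd_sum_iff_odd_card_odd, ← odd_sum_iff_odd_card_odd,
    sum_card_bipartiteAbove_eq_sum_card_bipartiteBelow]

theorem Finset.exists_eq_pair_of_mem {α : Type*} [DecidableEq α] {s : Finset α} {a : α}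
    (hs : #s = 2) (ha : a ∈ s) : ∃ b, b ≠ a ∧ s = {a, b} := by
  obtain ⟨b, hb, hba⟩ := exists_mem_ne (hs ▸ one_lt_two) a
  refine ⟨b, hba, (eq_of_subset_of_card_le (insert_subset ha (singleton_subset_iff.2 hb)) ?_).symm⟩
  rw [hs, card_pair hba.symm]

theorem Finset.sum_triple {ι M : Type*} [DecidableEq ι] [AddCommMonoid M] {a b c : ι}
    (hab : a ≠ b) (hac : a ≠ c) (hbc : b ≠ c) (f : ι → M) :
    ∑ v ∈ ({a, b, c} : Finset ι), f v = f a + f b + f c := by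
  rw [sum_insert (by simp [hab, hac]), sum_pair hbc, add_assoc]

section Labels

variable {α : Type*} [DecidableEq α] {s τ : Finset α} {ℓ : α → Fin 3}

theorem card_filter_powersetCard_two_image_eq (s : Finset α) (ℓ : α → Fin 3) :
    #{τ ∈ s.powersetCard 2 | τ.image ℓ = {0, 1}} = #{v ∈ s | ℓ v = 0} * #{v ∈ s | ℓ v = 1} := by
  rw [← card_product]
  symm
  refine card_bij (fun p _ => {p.1, p.2}) ?_ ?_ ?_
  · rintro ⟨u, v⟩ h
    simp only [mem_product, mem_filter] at h
    have huv : u ≠ v := fun e => by simp [e, h.2.2] at h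
    refine mem_filter.2 ⟨mem_powersetCard.2 ⟨insert_subset h.1.1 (singleton_subset_iff.2 h.2.1),
      card_pair huv⟩, by simp [h.1.2, h.2.2]⟩
  · rintro ⟨u, v⟩ h ⟨u', v'⟩ h' e
    simp only [mem_product, mem_filter] at h h'
    have hu : u ∈ ({u', v'} : Finset α) := e ▸ mem_insert_self u {v}
    have hv : v ∈ ({u', v'} : Finset α) := e ▸ mem_insert_of_mem (mem_singleton_self v)
    simp only [mem_insert, mem_singleton] at hu hv
    rcases hu with rfl | rfl <;> rcases hv with rfl | rfl <;> simp_all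
  · intro τ hτ
    obtain ⟨hτs, hτ₂⟩ := mem_powersetCard.1 (mem_filter.1 hτ).1
    have himage := (mem_filter.1 hτ).2
    obtain ⟨u, hu, hu₀⟩ := mem_image.1 (himage ▸ mem_insert_self 0 {1} : (0 : Fin 3) ∈ τ.image ℓ)
    obtain ⟨v, hv, hv₁⟩ := mem_image.1 (himage ▸ by simp : (1 : Fin 3) ∈ τ.image ℓ)
    have huv : u ≠ v := fun e => by simp [e, hv₁] at hu₀
    refine ⟨(u, v), mem_product.2 ⟨mem_filter.2 ⟨hτs hu, hu₀⟩, mem_filter.2 ⟨hτs hv, hv₁⟩⟩, ?_⟩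
    exact eq_of_subset_of_card_le (insert_subset hu (singleton_subset_iff.2 hv))
      (by rw [hτ₂, card_pair huv])

theorem odd_card_filter_powersetCard_two_image_iff (hs : #s = 3) :
    Odd #{τ ∈ s.powersetCard 2 | τ.image ℓ = {0, 1}} ↔ s.image ℓ = univ := by
  have hsum : #s = #{v ∈ s | ℓ v = 0} + #{v ∈ s | ℓ v = 1} + #{v ∈ s | ℓ v = 2} := by
    rw [card_eq_sum_card_fiberwise (f := ℓ) (t := univ) (fun _ _ => mem_coe.2 (mem_univ _)),
      Fin.sum_univ_three]
  have himage : s.image ℓ = univ ↔ ∀ i, 0 < #{v ∈ s | ℓ v = i} := by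
    simp [eq_univ_iff_forall, card_pos, filter_nonempty_iff]
  rw [card_filter_powersetCard_two_image_eq, Nat.odd_mul, himage, Nat.odd_iff, Nat.odd_iff]
  constructor
  · rintro ⟨h₀, h₁⟩ i
    rcases (by omega : i = 0 ∨ i = 1 ∨ i = 2) with rfl | rfl | rfl <;> omega
  · intro h
    have := h 0
    have := h 1
    have := h 2
    omega

theorem odd_card_filter_eq_zero_iff (hτ : #τ = 2) (hℓ : ∀ v ∈ τ, ℓ v = 0 ∨ ℓ v = 1) :
    Odd #{v ∈ τ | ℓ v = 0} ↔ τ.image ℓ = {0, 1} := by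
  obtain ⟨x, y, hxy, rfl⟩ := card_eq_two.1 hτ
  rcases hℓ x (by simp) with hx | hx <;> rcases hℓ y (by simp) with hy | hy <;>
    simp [filter_insert, filter_singleton, hxy, hx, hy] <;> decide

end Labels

section ConvexHull

variable {ι E : Type*} [AddCommGroup E] [Module ℝ E]

theorem Finset.two_le_card_of_mem_convexHull {s : Finset E} {p q : E} (hpq : p ≠ q)
    (hp : p ∈ convexHull ℝ (s : Set E)) (hq : q ∈ convexHull ℝ (s : Set E)) : 2 ≤ #s := by
  by_contra! h
  obtain ⟨u, hu⟩ := card_le_one_iff_subset_singleton.1 (Nat.lt_succ_iff.1 h)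
  have hsub : convexHull ℝ (s : Set E) ⊆ {u} := by
    simpa using convexHull_mono (𝕜 := ℝ) (coe_subset.2 hu)
  exact hpq ((hsub hp).trans (hsub hq).symm)

theorem mem_convexHull_triple_iff [DecidableEq E] (hab : a ≠ b) (hac : a ≠ c) (hbc : b ≠ c) :
    x ∈ convexHull ℝ (({a, b, c} : Finset E) : Set E) ↔ ∃ α β γ : ℝ, 0 ≤ α ∧ 0 ≤ β ∧ 0 ≤ γ ∧
      α + β + γ = 1 ∧ α • a + β • b + γ • c = x := by
  rw [mem_convexHull']
  constructor
  · rintro ⟨w, hw₀, hw₁, hx⟩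
    rw [sum_triple hab hac hbc] at hw₁ hx
    exact ⟨w a, w b, w c, hw₀ a (by simp), hw₀ b (by simp), hw₀ c (by simp), hw₁, hx⟩
  · rintro ⟨α, β, γ, hα, hβ, hγ, h₁, hx⟩
    refine ⟨fun v => if v = a then α else if v = b then β else γ, ?_, ?_, ?_⟩
    · intro v _
      dsimp only
      split_ifs <;> assumption
    all_goals simpa [sum_triple hab hac hbc, hab.symm, hac.symm, hbc.symm]

theorem apply_eq_zero_of_mem_convexHull {s : Set (ι → ℝ)} {i : ι} (hs : ∀ v ∈ s, v i = 0)
    {x : ι → ℝ} (hx : x ∈ convexHull ℝ s) : x i = 0 :=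
  convexHull_min hs (convex_hyperplane (LinearMap.proj (R := ℝ) (φ := fun _ : ι => ℝ) i).isLinear 0) hx

theorem mem_convexHull_filter_of_apply_eq_zero {s : Finset (ι → ℝ)} {i : ι}
    (hs : ∀ v ∈ s, 0 ≤ v i) {x : ι → ℝ} (hx : x ∈ convexHull ℝ (s : Set (ι → ℝ)))
    (hxi : x i = 0) : x ∈ convexHull ℝ (({v ∈ s | v i = 0} : Finset _) : Set (ι → ℝ)) := by
  obtain ⟨w, hw₀, hw₁, rfl⟩ := mem_convexHull'.1 hx
  have hvanish : ∀ v ∈ s, w v ≠ 0 → v i = 0 := by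
    have hsum : ∑ v ∈ s, w v * v i = 0 := by simpa [Finset.sum_apply] using hxi
    intro v hv hwv
    have := (sum_eq_zero_iff_of_nonneg fun u hu => mul_nonneg (hw₀ u hu) (hs u hu)).1 hsum v hv
    exact (mul_eq_zero.1 this).resolve_left hwv
  refine mem_convexHull'.2 ⟨w, fun v hv => hw₀ v (mem_filter.1 hv).1, ?_, ?_⟩
  · rwa [sum_filter_of_ne hvanish]
  · exact sum_filter_of_ne fun v hv hwv => hvanish v hv (left_ne_zero_of_smul hwv)

end ConvexHull

section StdSimplex

variable {N : ℕ} {p q x y z : ℝ³} {i : Fin 3}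

theorem eq_vtx_of_apply_eq_one {x : Fin N → ℝ} (hx : x ∈ stdSimplex ℝ (Fin N)) {i : Fin N}
    (hxi : x i = 1) : x = vtx N i := by
  have hrest : ∑ j ∈ univ.erase i, x j = 0 := by
    have := add_sum_erase univ x (mem_univ i)
    linarith [hx.2]
  funext j
  by_cases hj : j = i
  · simp [vtx, hj, hxi]
  · simpa [vtx, hj] using (sum_eq_zero_iff_of_nonneg fun k _ => hx.1 k).1 hrest j (by simp [hj])

theorem vtx_mem_stdSimplex (i : Fin N) : vtx N i ∈ stdSimplex ℝ (Fin N) := by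
  convert ite_eq_mem_stdSimplex ℝ i using 2 with j
  simp [vtx, eq_comm]

theorem vtx_mem_extremePoints (i : Fin N) :
    vtx N i ∈ (stdSimplex ℝ (Fin N)).extremePoints ℝ := by
  refine ⟨vtx_mem_stdSimplex i, fun x hx y hy ⟨a, b, ha, hb, hab, hxy⟩ => ?_⟩
  have hi : a * x i + b * y i = 1 := by simpa [vtx] using congrFun hxy i
  have hx1 := (mem_Icc_of_mem_stdSimplex hx i).2
  have hy1 := (mem_Icc_of_mem_stdSimplex hy i).2
  exact eq_vtx_of_apply_eq_one hx (by nlinarith)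

theorem apply_zero_add_apply_one {p : ℝ³} (hp : p ∈ stdSimplex ℝ (Fin 3)) (hp₂ : p 2 = 0) :
    p 0 + p 1 = 1 := by
  simpa [Fin.sum_univ_three, hp₂] using hp.2

theorem eq_of_apply_eq_of_apply_two_eq_zero (hp : p ∈ stdSimplex ℝ (Fin 3))
    (hq : q ∈ stdSimplex ℝ (Fin 3)) (hp₂ : p 2 = 0) (hq₂ : q 2 = 0) (hi : i ≠ 2)
    (h : p i = q i) : p = q := by
  have hp' := hp.2
  have hq' := hq.2
  simp only [Fin.sum_univ_three] at hp' hq'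
  funext k
  fin_cases i <;> fin_cases k <;> simp_all <;> linarith

theorem mem_segment_of_apply_two_eq_zero (hx : x ∈ stdSimplex ℝ (Fin 3))
    (hy : y ∈ stdSimplex ℝ (Fin 3)) (hz : z ∈ stdSimplex ℝ (Fin 3)) (hx₂ : x 2 = 0)
    (hy₂ : y 2 = 0) (hz₂ : z 2 = 0) (hi : i ≠ 2) (hxy : x i ≤ y i) (hyz : y i ≤ z i) :
    y ∈ segment ℝ x z := by
  rcases hxy.eq_or_lt with hxy | hxy
  · rw [eq_of_apply_eq_of_apply_two_eq_zero hy hx hy₂ hx₂ hi hxy.symm]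
    exact left_mem_segment ℝ x z
  set s := (y i - x i) / (z i - x i)
  have hs₀ : 0 ≤ s := div_nonneg (by linarith) (by linarith)
  have hs₁ : s ≤ 1 := (div_le_one (by linarith)).2 (by linarith)
  have hmem : (1 - s) • x + s • z ∈ segment ℝ x z := ⟨1 - s, s, by linarith, hs₀, by ring, rfl⟩
  convert hmem using 1
  refine eq_of_apply_eq_of_apply_two_eq_zero hy
    (convex_stdSimplex ℝ (Fin 3) hx hz (by linarith) hs₀ (by ring)) hy₂ (by simp [hx₂, hz₂]) hi ?_
  simp only [Pi.add_apply, Pi.smul_apply, smul_eq_mul]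
  rw [show (1 - s) * x i + s * z i = x i + s * (z i - x i) by ring,
    div_mul_cancel₀ _ (sub_pos.2 (hxy.trans_le hyz)).ne']
  ring

end StdSimplex

namespace Triangulation

variable {N : ℕ} (T : Triangulation N) {σ σ' τ : Finset (Fin N → ℝ)} {x v : Fin N → ℝ}

theorem convexHull_subset_stdSimplex (hσ : σ ∈ T.facets) :
    convexHull ℝ (σ : Set (Fin N → ℝ)) ⊆ stdSimplex ℝ (Fin N) := fun _ hx =>
  T.covers ▸ Set.mem_biUnion hσ hx

theorem mem_stdSimplex (hσ : σ ∈ T.facets) (hv : v ∈ σ) : v ∈ stdSimplex ℝ (Fin N) :=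
  T.convexHull_subset_stdSimplex hσ (subset_convexHull ℝ _ hv)

theorem mem_vertices (hσ : σ ∈ T.facets) (hv : v ∈ σ) : v ∈ T.vertices :=
  mem_biUnion.2 ⟨σ, hσ, hv⟩

theorem exists_facet_mem_convexHull (hx : x ∈ stdSimplex ℝ (Fin N)) :
    ∃ σ ∈ T.facets, x ∈ convexHull ℝ (σ : Set (Fin N → ℝ)) := by
  rw [← T.covers] at hx
  simpa using hx

/-- The vertices of a facet lie on the hyperplane `∑ i, x i = 1`, which misses the origin, so
their affine independence upgrades to linear independence. -/
theorem linearIndependent (hσ : σ ∈ T.facets) :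
    LinearIndependent ℝ ((↑) : σ → Fin N → ℝ) := by
  refine Fintype.linearIndependent_iff.2 fun g hg => ?_
  have hg₀ : ∑ v, g v = 0 := by
    have := congrArg (fun y : Fin N → ℝ => ∑ j, y j) hg
    simp only [Finset.sum_apply, Pi.smul_apply, smul_eq_mul, Pi.zero_apply, sum_const_zero] at this
    rw [sum_comm] at this
    simpa [← mul_sum, (T.mem_stdSimplex hσ (Subtype.prop _)).2] using this
  exact fun v => (T.indep σ hσ).eq_zero_of_sum_eq_zero hg₀ hg v (mem_univ v)

theorem span_eq_top (hσ : σ ∈ T.facets) : Submodule.span ℝ (σ : Set (Fin N → ℝ)) = ⊤ := by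
  simpa using (T.linearIndependent hσ).span_eq_top_of_card_eq_finrank'
    (by simp [T.card_eq σ hσ])

theorem exists_weights (hσ : σ ∈ T.facets) (hx : ∑ i, x i = 1) :
    ∃ w : (Fin N → ℝ) → ℝ, ∑ v ∈ σ, w v = 1 ∧ ∑ v ∈ σ, w v • v = x := by
  obtain ⟨w, -, hw⟩ := Submodule.mem_span_finset.1 (T.span_eq_top hσ ▸ Submodule.mem_top (x := x))
  refine ⟨w, ?_, hw⟩
  rw [← hx, ← hw]
  simp only [Finset.sum_apply, Pi.smul_apply, smul_eq_mul]
  rw [sum_comm]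
  exact sum_congr rfl fun v hv => by rw [← mul_sum, (T.mem_stdSimplex hσ hv).2, mul_one]

theorem exists_mem_apply_ne_zero (hσ : σ ∈ T.facets) (i : Fin N) : ∃ v ∈ σ, v i ≠ 0 := by
  by_contra! h
  obtain ⟨w, -, hw⟩ := Submodule.mem_span_finset.1
    (T.span_eq_top hσ ▸ Submodule.mem_top (x := vtx N i))
  have := congrFun hw i
  simp only [Finset.sum_apply, Pi.smul_apply, smul_eq_mul] at this
  rw [sum_eq_zero fun v hv => by simp [h v hv]] at this
  simp [vtx] at this

theorem card_filter_apply_eq_zero_lt (hσ : σ ∈ T.facets) (i : Fin N) :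
    #{v ∈ σ | v i = 0} < N := by
  refine (card_lt_card (filter_ssubset.2 ?_)).trans_eq (T.card_eq σ hσ)
  simpa using T.exists_mem_apply_ne_zero hσ i

theorem subset_of_mem_convexHull (hσ : σ ∈ T.facets) (hσ' : σ' ∈ T.facets) (hτ : τ ⊆ σ)
    (hx : x ∈ convexHull ℝ (τ : Set (Fin N → ℝ)))
    (hx' : x ∈ convexHull ℝ (σ' : Set (Fin N → ℝ)))
    (hface : ∀ v ∈ τ, x ∉ convexHull ℝ ((τ.erase v : Finset _) : Set (Fin N → ℝ))) :
    τ ⊆ σ' := by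
  intro v hv
  by_contra hvσ'
  have hxσσ' : x ∈ convexHull ℝ ((σ ∩ σ' : Finset _) : Set (Fin N → ℝ)) := by
    rw [← T.faceToFace σ hσ σ' hσ']
    exact ⟨convexHull_mono (coe_subset.2 hτ) hx, hx'⟩
  have hxτ : x ∈ convexHull ℝ (((σ ∩ σ') ∩ τ : Finset _) : Set (Fin N → ℝ)) := by
    rw [coe_inter, (T.indep σ hσ).convexHull_inter inter_subset_left hτ]
    exact ⟨hxσσ', hx⟩
  refine hface v hv (convexHull_mono (coe_subset.2 fun y hy => ?_) hxτ)
  simp only [mem_inter] at hy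
  exact mem_erase.2 ⟨fun h => hvσ' (h ▸ hy.1.2), hy.2⟩

theorem mem_of_mem_convexHull (hv : v ∈ T.vertices) (hσ : σ ∈ T.facets)
    (hvσ : v ∈ convexHull ℝ (σ : Set (Fin N → ℝ))) : v ∈ σ := by
  obtain ⟨σ₀, hσ₀, hvσ₀⟩ := mem_biUnion.1 hv
  refine T.subset_of_mem_convexHull hσ₀ hσ (singleton_subset_iff.2 hvσ₀) (by simp) hvσ ?_
    (mem_singleton_self v)
  simp

theorem vtx_mem_vertices (i : Fin N) : vtx N i ∈ T.vertices := by
  obtain ⟨σ, hσ, hiσ⟩ := T.exists_facet_mem_convexHull (vtx_mem_stdSimplex i)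
  have hext := inter_extremePoints_subset_extremePoints_of_subset
    (T.convexHull_subset_stdSimplex hσ) ⟨hiσ, vtx_mem_extremePoints i⟩
  exact T.mem_vertices hσ (extremePoints_convexHull_subset hext)

/-- Pigeonhole: some facet contains `x + d / (n + 1)` for infinitely many `n`; it is closed, so it
contains `x` too. -/
theorem exists_facet_mem_convexHull_add_smul (hx : x ∈ stdSimplex ℝ (Fin N))
    {d : Fin N → ℝ} (hxd : x + d ∈ stdSimplex ℝ (Fin N)) :
    ∃ σ ∈ T.facets, x ∈ convexHull ℝ (σ : Set (Fin N → ℝ)) ∧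
      ∃ t : ℝ, 0 < t ∧ x + t • d ∈ convexHull ℝ (σ : Set (Fin N → ℝ)) := by
  set y : ℕ → Fin N → ℝ := fun n => x + (1 / ((n : ℝ) + 1)) • d
  have hy : ∀ n, y n ∈ stdSimplex ℝ (Fin N) := fun n => by
    have hn : 1 / ((n : ℝ) + 1) ≤ 1 := div_le_one_of_le₀ (by simp) (by positivity)
    convert convex_stdSimplex ℝ (Fin N) hx hxd (sub_nonneg.2 hn) (by positivity)
      (sub_add_cancel 1 _) using 1
    module
  have hlim : Tendsto y atTop (𝓝 x) := by
    simpa [y] using ((tendsto_one_div_add_atTop_nhds_zero_nat (𝕜 := ℝ)).smul_const d).const_add x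
  obtain ⟨σ, hσ, hfreq⟩ := (frequently_exists_finset T.facets).1
    (Frequently.of_forall (f := atTop) fun n => T.exists_facet_mem_convexHull (hy n))
  obtain ⟨n, hn⟩ := hfreq.exists
  exact ⟨σ, hσ, (σ.finite_toSet.isClosed_convexHull ℝ).mem_of_frequently_of_tendsto hfreq hlim,
    _, by positivity, hn⟩

noncomputable def edges : Finset (Finset (Fin N → ℝ)) :=
  T.facets.biUnion (powersetCard 2)

theorem mem_edges : τ ∈ T.edges ↔ (∃ σ ∈ T.facets, τ ⊆ σ) ∧ #τ = 2 := by
  simp only [edges, mem_biUnion, mem_powersetCard]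
  exact ⟨fun ⟨σ, hσ, h, h₂⟩ => ⟨⟨σ, hσ, h⟩, h₂⟩, fun ⟨⟨σ, hσ, h⟩, h₂⟩ => ⟨σ, hσ, h, h₂⟩⟩

theorem filter_edges_subset (hσ : σ ∈ T.facets) : {τ ∈ T.edges | τ ⊆ σ} = σ.powersetCard 2 := by
  ext τ
  simp only [mem_filter, mem_edges, mem_powersetCard]
  exact ⟨fun ⟨⟨_, hτ₂⟩, hτσ⟩ => ⟨hτσ, hτ₂⟩, fun ⟨hτσ, hτ₂⟩ => ⟨⟨⟨σ, hσ, hτσ⟩, hτ₂⟩, hτσ⟩⟩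

end Triangulation

namespace Triangulation

variable (T : Triangulation 3) {σ σ' σ'' τ τ' : Finset ℝ³} {a b c c' c'' p q v w x z z' : ℝ³}
  {i : Fin 3} {α β γ α' β' γ' : ℝ}

theorem exists_eq_triple (hσ : σ ∈ T.facets) (hab : a ≠ b) (hsub : {a, b} ⊆ σ) :
    ∃ c, a ≠ c ∧ b ≠ c ∧ σ = {a, b, c} := by
  obtain ⟨c, hcσ, hc⟩ := exists_mem_notMem_of_card_lt_card (s := {a, b}) (t := σ)
    (by rw [T.card_eq σ hσ, card_pair hab]; norm_num)
  simp only [mem_insert, mem_singleton, not_or] at hc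
  refine ⟨c, Ne.symm hc.1, Ne.symm hc.2, (eq_of_subset_of_card_le ?_ ?_).symm⟩
  · exact insert_subset (hsub (by simp)) (insert_subset (hsub (by simp)) (by simpa using hcσ))
  · rw [T.card_eq σ hσ, card_insert_of_notMem (by simp [hab, Ne.symm hc.1]), card_pair (Ne.symm hc.2)]

theorem coeffs_unique (hσ : {a, b, c} ∈ T.facets) (hab : a ≠ b) (hac : a ≠ c) (hbc : b ≠ c)
    (hsum : α + β + γ = α' + β' + γ')
    (h : α • a + β • b + γ • c = α' • a + β' • b + γ' • c) : α = α' ∧ β = β' ∧ γ = γ' := by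
  obtain ⟨w, rfl, rfl, rfl⟩ : ∃ w : ℝ³ → ℝ, w a = α ∧ w b = β ∧ w c = γ :=
    ⟨fun v => if v = a then α else if v = b then β else γ, by simp [hab.symm, hac.symm, hbc.symm]⟩
  obtain ⟨w', rfl, rfl, rfl⟩ : ∃ w : ℝ³ → ℝ, w a = α' ∧ w b = β' ∧ w c = γ' :=
    ⟨fun v => if v = a then α' else if v = b then β' else γ', by simp [hab.symm, hac.symm, hbc.symm]⟩
  have := (T.indep _ hσ).eq_of_sum_eq_sum_subtype (w₁ := w) (w₂ := w')
    (by simpa [sum_triple hab hac hbc] using hsum) (by simpa [sum_triple hab hac hbc] using h)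
  exact ⟨this a (by simp), this b (by simp), this c (by simp)⟩

theorem exists_coeffs (hσ : {a, b, c} ∈ T.facets) (hab : a ≠ b) (hac : a ≠ c) (hbc : b ≠ c)
    (hx : x ∈ stdSimplex ℝ (Fin 3)) :
    ∃ α β γ : ℝ, α + β + γ = 1 ∧ α • a + β • b + γ • c = x := by
  obtain ⟨w, hw₁, hw⟩ := T.exists_weights hσ hx.2
  rw [sum_triple hab hac hbc] at hw₁ hw
  exact ⟨w a, w b, w c, hw₁, hw⟩

/-- Two facets sharing the edge `{a, b}` lie on opposite sides of it. -/
theorem coeff_neg_of_facets (hσ : {a, b, c} ∈ T.facets) (hσ' : {a, b, c'} ∈ T.facets)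
    (hab : a ≠ b) (hac : a ≠ c) (hbc : b ≠ c) (hac' : a ≠ c') (hbc' : b ≠ c') (hcc' : c ≠ c')
    (hsum : α + β + γ = 1) (hc' : α • a + β • b + γ • c = c') : γ < 0 := by
  by_contra! hγ
  have hinter : ({a, b, c} ∩ {a, b, c'} : Finset ℝ³) = {a, b} := by
    ext v
    simp only [mem_inter, mem_insert, mem_singleton]
    constructor
    · rintro ⟨h | h | h, h' | h' | h'⟩
      all_goals first | exact .inl h | exact .inr h | exfalso
      exacts [hac (h'.symm.trans h), hbc (h'.symm.trans h), hcc' (h.symm.trans h')]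
    · rintro (h | h) <;> simp [h]
  -- `z` is a point of both hulls with `c`-coordinate `t * γ`, which must then vanish.
  set K := |α| + |β|
  set t := 1 / (1 + 2 * K)
  have ht : 0 < t := by positivity
  have htK : t * (1 + 2 * K) = 1 := one_div_mul_cancel (by positivity)
  set z := (t * (K + α)) • a + (t * (K + β)) • b + (t * γ) • c
  have hzσ : z ∈ convexHull ℝ (({a, b, c} : Finset ℝ³) : Set ℝ³) :=
    (mem_convexHull_triple_iff hab hac hbc).2 ⟨_, _, _,
      mul_nonneg ht.le (by linarith [neg_abs_le α, abs_nonneg β]),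
      mul_nonneg ht.le (by linarith [neg_abs_le β, abs_nonneg α]), mul_nonneg ht.le hγ,
      by linear_combination htK + t * hsum, rfl⟩
  have hzσ' : z ∈ convexHull ℝ (({a, b, c'} : Finset ℝ³) : Set ℝ³) :=
    (mem_convexHull_triple_iff hab hac' hbc').2 ⟨t * K, t * K, t, by positivity, by positivity,
      ht.le, by linear_combination htK, by rw [← hc']; module⟩
  have hzab : z ∈ convexHull ℝ (({a, b} : Finset ℝ³) : Set ℝ³) := by
    rw [← hinter, ← T.faceToFace _ hσ _ hσ']
    exact ⟨hzσ, hzσ'⟩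
  rw [coe_pair, convexHull_pair] at hzab
  obtain ⟨s, s', -, -, hss', hz⟩ := hzab
  have htγ := (T.coeffs_unique hσ hab hac hbc (α := t * (K + α)) (β := t * (K + β)) (γ := t * γ)
    (α' := s) (β' := s') (γ' := 0)
    (by linear_combination htK + t * hsum - hss') (by rw [hz]; module)).2.2
  have hγ0 : γ = 0 := by simpa [ht.ne'] using htγ
  have := (T.coeffs_unique hσ' hab hac' hbc' (α := α) (β := β) (γ := -1) (α' := 0) (β' := 0) (γ' := 0)
    (by linarith) (by rw [← hc', hγ0]; module)).2.2
  norm_num at this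

theorem eq_or_eq_of_facets (hσ : {a, b, c} ∈ T.facets) (hσ' : {a, b, c'} ∈ T.facets)
    (hσ'' : {a, b, c''} ∈ T.facets) (hab : a ≠ b) (hac : a ≠ c) (hbc : b ≠ c) (hac' : a ≠ c')
    (hbc' : b ≠ c') (hac'' : a ≠ c'') (hbc'' : b ≠ c'') (hcc' : c ≠ c') :
    c'' = c ∨ c'' = c' := by
  by_contra! h
  obtain ⟨α₁, β₁, γ₁, hsum₁, hc'⟩ :=
    T.exists_coeffs hσ hab hac hbc (T.mem_stdSimplex hσ' (by simp : c' ∈ _))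
  obtain ⟨α₂, β₂, γ₂, hsum₂, hc''⟩ :=
    T.exists_coeffs hσ hab hac hbc (T.mem_stdSimplex hσ'' (by simp : c'' ∈ _))
  obtain ⟨p, q, r, hsum₃, hc''₃⟩ :=
    T.exists_coeffs hσ' hab hac' hbc' (T.mem_stdSimplex hσ'' (by simp : c'' ∈ _))
  have hγ₁ := T.coeff_neg_of_facets hσ hσ' hab hac hbc hac' hbc' hcc' hsum₁ hc'
  have hγ₂ := T.coeff_neg_of_facets hσ hσ'' hab hac hbc hac'' hbc'' (Ne.symm h.1) hsum₂ hc''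
  have hr := T.coeff_neg_of_facets hσ' hσ'' hab hac' hbc' hac'' hbc'' (Ne.symm h.2) hsum₃ hc''₃
  have := (T.coeffs_unique hσ hab hac hbc (α := α₂) (β := β₂) (γ := γ₂) (α' := p + r * α₁) (β' := q + r * β₁) (γ' := r * γ₁)
    (by linear_combination hsum₂ - hsum₃ - r * hsum₁)
    (by rw [hc'', ← hc''₃, ← hc']; module)).2.2
  nlinarith [mul_pos_of_neg_of_neg hr hγ₁]

/-- Off the boundary, the simplex contains the points `m + s • (m - c)` beyond the midpoint `m`
of `{a, b}` for small `s > 0`; a facet containing `m` and some of them contains the edge `{a, b}`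
(as `m` lies on no proper face of it) but is not `{a, b, c}`. -/
theorem exists_facet_ne (hσ : {a, b, c} ∈ T.facets) (hab : a ≠ b) (hac : a ≠ c)
    (hbc : b ≠ c) (hint : ∀ i, a i ≠ 0 ∨ b i ≠ 0) :
    ∃ σ' ∈ T.facets, σ' ≠ {a, b, c} ∧ {a, b} ⊆ σ' := by
  have ha := T.mem_stdSimplex hσ (by simp : a ∈ _)
  have hb := T.mem_stdSimplex hσ (by simp : b ∈ _)
  have hc := T.mem_stdSimplex hσ (by simp : c ∈ _)
  set m : ℝ³ := (1 / 2 : ℝ) • a + (1 / 2 : ℝ) • b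
  have hm : ∀ i, 0 < m i := fun i => by
    have := ha.1 i; have := hb.1 i
    rcases hint i with h | h <;> simp only [m, Pi.add_apply, Pi.smul_apply, smul_eq_mul] <;>
      [have := lt_of_le_of_ne (ha.1 i) (Ne.symm h); have := lt_of_le_of_ne (hb.1 i) (Ne.symm h)] <;>
      linarith
  set t₀ := univ.inf' univ_nonempty m
  have ht₀ : 0 < t₀ := (lt_inf'_iff _).2 fun i _ => hm i
  have hmΔ : m ∈ stdSimplex ℝ (Fin 3) :=
    convex_stdSimplex ℝ (Fin 3) ha hb (by norm_num) (by norm_num) (by norm_num)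
  have hout : m + t₀ • (m - c) ∈ stdSimplex ℝ (Fin 3) := by
    refine ⟨fun i => ?_, ?_⟩
    · have := inf'_le m (mem_univ i)
      have := (mem_Icc_of_mem_stdSimplex hc i).2
      simp only [Pi.add_apply, Pi.smul_apply, Pi.sub_apply, smul_eq_mul]
      nlinarith [hm i, hc.1 i]
    · simp [sum_add_distrib, ← mul_sum, hmΔ.2, hc.2]
  obtain ⟨σ', hσ', hmσ', t, ht, hyσ'⟩ := T.exists_facet_mem_convexHull_add_smul hmΔ hout
  have hsub : {a, b} ⊆ σ' := by
    refine T.subset_of_mem_convexHull hσ hσ' (by intro v; simp; tauto) ?_ hmσ' ?_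
    · rw [coe_pair, convexHull_pair]
      exact ⟨1 / 2, 1 / 2, by norm_num, by norm_num, by norm_num, rfl⟩
    · intro v hv h
      rcases mem_insert.1 hv with hva | hv
      · rw [hva, erase_insert (by simpa using hab), coe_singleton, convexHull_singleton] at h
        have h' : (1 / 2 : ℝ) • a + (1 / 2 : ℝ) • b = b := h
        exact hab (by linear_combination (norm := module) (2 : ℝ) • h')
      · rw [mem_singleton.1 hv, pair_comm, erase_insert (by simpa using hab.symm), coe_singleton,
          convexHull_singleton] at h
        have h' : (1 / 2 : ℝ) • a + (1 / 2 : ℝ) • b = a := h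
        exact hab (by linear_combination (norm := module) -(2 : ℝ) • h')
  refine ⟨σ', hσ', fun h => ?_, hsub⟩
  rw [h, mem_convexHull_triple_iff hab hac hbc] at hyσ'
  obtain ⟨α, β, γ, -, -, hγ, hsum, hy⟩ := hyσ'
  have := (T.coeffs_unique hσ hab hac hbc (α := α) (β := β) (γ := γ) (α' := (1 + t * t₀) / 2) (β' := (1 + t * t₀) / 2)
    (γ' := -(t * t₀)) (by linear_combination hsum) (by rw [hy]; simp only [m]; module)).2.2
  nlinarith [mul_pos ht ht₀]

theorem eq_of_facets_of_apply_eq_zero (hσ : {a, b, c} ∈ T.facets) (hσ' : {a, b, c'} ∈ T.facets)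
    (hab : a ≠ b) (hac : a ≠ c) (hbc : b ≠ c) (hac' : a ≠ c') (hbc' : b ≠ c') {i : Fin 3}
    (hai : a i = 0) (hbi : b i = 0) : c' = c := by
  by_contra hcc'
  obtain ⟨α, β, γ, hsum, hc'⟩ :=
    T.exists_coeffs hσ hab hac hbc (T.mem_stdSimplex hσ' (by simp : c' ∈ _))
  have hγ := T.coeff_neg_of_facets hσ hσ' hab hac hbc hac' hbc' (Ne.symm hcc') hsum hc'
  obtain ⟨v, hv, hvi⟩ := T.exists_mem_apply_ne_zero hσ i
  have hci : 0 < c i := by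
    simp only [mem_insert, mem_singleton] at hv
    rcases hv with rfl | rfl | rfl
    exacts [absurd hai hvi, absurd hbi hvi,
      lt_of_le_of_ne ((T.mem_stdSimplex hσ (by simp)).1 i) (Ne.symm hvi)]
  have hc'i : c' i = γ * c i := by
    simp [← hc', hai, hbi]
  have := (T.mem_stdSimplex hσ' (by simp : c' ∈ _)).1 i
  nlinarith

theorem card_filter_superset_of_apply_eq_zero (hσ : σ ∈ T.facets) (hab : a ≠ b)
    (hsub : {a, b} ⊆ σ) {i : Fin 3} (hai : a i = 0) (hbi : b i = 0) :
    #{σ' ∈ T.facets | {a, b} ⊆ σ'} = 1 := by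
  obtain ⟨c, hac, hbc, rfl⟩ := T.exists_eq_triple hσ hab hsub
  refine card_eq_one.2 ⟨{a, b, c}, ext fun σ' => ⟨fun h => ?_, fun h => ?_⟩⟩
  · obtain ⟨hσ', hsub'⟩ := mem_filter.1 h
    obtain ⟨c', hac', hbc', rfl⟩ := T.exists_eq_triple hσ' hab hsub'
    rw [T.eq_of_facets_of_apply_eq_zero hσ hσ' hab hac hbc hac' hbc' hai hbi]
    exact mem_singleton_self _
  · rw [mem_singleton.1 h]
    exact mem_filter.2 ⟨hσ, hsub⟩

theorem card_filter_superset_of_apply_ne_zero (hσ : σ ∈ T.facets) (hab : a ≠ b)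
    (hsub : {a, b} ⊆ σ) (hint : ∀ i, a i ≠ 0 ∨ b i ≠ 0) :
    #{σ' ∈ T.facets | {a, b} ⊆ σ'} = 2 := by
  obtain ⟨c, hac, hbc, rfl⟩ := T.exists_eq_triple hσ hab hsub
  obtain ⟨σ', hσ', hne, hsub'⟩ := T.exists_facet_ne hσ hab hac hbc hint
  obtain ⟨c', hac', hbc', rfl⟩ := T.exists_eq_triple hσ' hab hsub'
  have hcc' : c ≠ c' := fun h => hne (h ▸ rfl)
  refine card_eq_two.2 ⟨{a, b, c}, {a, b, c'}, hne.symm, ext fun σ'' => ⟨fun h => ?_, fun h => ?_⟩⟩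
  · obtain ⟨hσ'', hsub''⟩ := mem_filter.1 h
    obtain ⟨c'', hac'', hbc'', rfl⟩ := T.exists_eq_triple hσ'' hab hsub''
    rcases T.eq_or_eq_of_facets hσ hσ' hσ'' hab hac hbc hac' hbc' hac'' hbc'' hcc' with rfl | rfl
      <;> simp
  · simp only [mem_insert, mem_singleton] at h
    rcases h with rfl | rfl
    exacts [mem_filter.2 ⟨hσ, hsub⟩, mem_filter.2 ⟨hσ', hsub'⟩]

noncomputable def bottomEdges : Finset (Finset ℝ³) :=
  {τ ∈ T.edges | ∀ v ∈ τ, v 2 = 0}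

theorem mem_bottomEdges : τ ∈ T.bottomEdges ↔ τ ∈ T.edges ∧ ∀ v ∈ τ, v 2 = 0 :=
  mem_filter

theorem mem_stdSimplex_of_mem_bottomEdges (hτ : τ ∈ T.bottomEdges) (hv : v ∈ τ) :
    v ∈ stdSimplex ℝ (Fin 3) ∧ v 2 = 0 := by
  obtain ⟨⟨σ, hσ, hτσ⟩, -⟩ := (T.mem_edges).1 (mem_filter.1 hτ).1
  exact ⟨T.mem_stdSimplex hσ (hτσ hv), (mem_filter.1 hτ).2 v hv⟩

theorem card_of_mem_bottomEdges (hτ : τ ∈ T.bottomEdges) : #τ = 2 :=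
  ((T.mem_edges).1 (T.mem_bottomEdges.1 hτ).1).2

theorem eq_filter_of_mem_bottomEdges (hτ : τ ∈ T.bottomEdges) (hσ : σ ∈ T.facets)
    (hτσ : τ ⊆ σ) : τ = {v ∈ σ | v 2 = 0} := by
  obtain ⟨hτ, hτ₂⟩ := mem_filter.1 hτ
  refine eq_of_subset_of_card_le (fun v hv => mem_filter.2 ⟨hτσ hv, hτ₂ v hv⟩) ?_
  rw [((T.mem_edges).1 hτ).2]
  exact Nat.lt_succ_iff.1 (T.card_filter_apply_eq_zero_lt hσ 2)

theorem eq_of_mem_convexHull_bottomEdges (hτ : τ ∈ T.bottomEdges) (hτ' : τ' ∈ T.bottomEdges)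
    (hpq : p ≠ q) (hp : p ∈ convexHull ℝ (τ : Set ℝ³)) (hp' : p ∈ convexHull ℝ (τ' : Set ℝ³))
    (hq : q ∈ convexHull ℝ (τ : Set ℝ³)) (hq' : q ∈ convexHull ℝ (τ' : Set ℝ³)) : τ = τ' := by
  obtain ⟨⟨σ, hσ, hτσ⟩, hτ₂⟩ := (T.mem_edges).1 (mem_filter.1 hτ).1
  obtain ⟨⟨σ', hσ', hτσ'⟩, -⟩ := (T.mem_edges).1 (mem_filter.1 hτ').1
  have hinter : ∀ {x}, x ∈ convexHull ℝ (τ : Set ℝ³) → x ∈ convexHull ℝ (τ' : Set ℝ³) →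
      x ∈ convexHull ℝ (({v ∈ σ ∩ σ' | v 2 = 0} : Finset ℝ³) : Set ℝ³) := fun hx hx' => by
    refine mem_convexHull_filter_of_apply_eq_zero
      (fun v hv => (T.mem_stdSimplex hσ (mem_inter.1 hv).1).1 2) ?_
      (apply_eq_zero_of_mem_convexHull (mem_filter.1 hτ).2 hx)
    rw [← T.faceToFace σ hσ σ' hσ']
    exact ⟨convexHull_mono (coe_subset.2 hτσ) hx, convexHull_mono (coe_subset.2 hτσ') hx'⟩
  have hcard := two_le_card_of_mem_convexHull hpq (hinter hp hp') (hinter hq hq')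
  have hF : ∀ {σ₀ τ₀}, σ₀ ∈ T.facets → τ₀ ∈ T.bottomEdges → τ₀ ⊆ σ₀ →
      {v ∈ σ ∩ σ' | v 2 = 0} ⊆ {v ∈ σ₀ | v 2 = 0} → {v ∈ σ ∩ σ' | v 2 = 0} = τ₀ :=
    fun hσ₀ hτ₀ hτσ₀ hsub => by
      rw [T.eq_filter_of_mem_bottomEdges hτ₀ hσ₀ hτσ₀] at ⊢
      refine eq_of_subset_of_card_le hsub ?_
      rw [← T.eq_filter_of_mem_bottomEdges hτ₀ hσ₀ hτσ₀, ((T.mem_edges).1 (mem_filter.1 hτ₀).1).2]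
      exact hcard
  rw [← hF hσ hτ hτσ (filter_subset_filter _ inter_subset_left),
    ← hF hσ' hτ' hτσ' (filter_subset_filter _ inter_subset_right)]

/-- Walking from a vertex `w` towards the corner `vtx 3 i` one stays, for a while, in a facet;
its bottom side is an edge at `w` leading in that direction. -/
theorem exists_pair_mem_bottomEdges (hw : w ∈ T.vertices) (hw₂ : w 2 = 0) (hi : i ≠ 2)
    (hwi : w i < 1) : ∃ z, w i < z i ∧ {w, z} ∈ T.bottomEdges := by
  obtain ⟨σ₀, hσ₀, hwσ₀⟩ := mem_biUnion.1 hw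
  have hwΔ := T.mem_stdSimplex hσ₀ hwσ₀
  obtain ⟨σ, hσ, hwσ, t, ht, hyσ⟩ := T.exists_facet_mem_convexHull_add_smul hwΔ
    (d := vtx 3 i - w) (by simpa using vtx_mem_stdSimplex i)
  set y := w + t • (vtx 3 i - w)
  have hyi : y i = w i + t * (1 - w i) := by simp [y, vtx]
  have hy₂ : y 2 = 0 := by simp [y, vtx, hw₂, Ne.symm hi]
  have hwy : w ≠ y := fun h => by nlinarith [congrFun h i]
  set F := {v ∈ σ | v 2 = 0}
  have hwF : w ∈ F := mem_filter.2 ⟨T.mem_of_mem_convexHull hw hσ hwσ, hw₂⟩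
  have hyF : y ∈ convexHull ℝ (F : Set ℝ³) := mem_convexHull_filter_of_apply_eq_zero
    (fun v hv => (T.mem_stdSimplex hσ hv).1 2) hyσ hy₂
  have hF : #F = 2 := le_antisymm (Nat.lt_succ_iff.1 (T.card_filter_apply_eq_zero_lt hσ 2))
    (two_le_card_of_mem_convexHull hwy (subset_convexHull ℝ _ hwF) hyF)
  obtain ⟨z, hzw, hFwz⟩ := exists_eq_pair_of_mem hF hwF
  have hwz : ({w, z} : Finset ℝ³) ∈ T.bottomEdges := by
    rw [← hFwz]
    exact mem_filter.2 ⟨(T.mem_edges).2 ⟨⟨σ, hσ, filter_subset _ _⟩, hF⟩,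
      fun v hv => (mem_filter.1 hv).2⟩
  refine ⟨z, ?_, hwz⟩
  rw [hFwz, coe_pair, convexHull_pair] at hyF
  obtain ⟨a, b, -, hb, hab, hy⟩ := hyF
  have := congrFun hy i
  simp only [Pi.add_apply, Pi.smul_apply, smul_eq_mul] at this
  nlinarith

theorem pair_eq_of_lt (hz : {w, z} ∈ T.bottomEdges) (hz' : {w, z'} ∈ T.bottomEdges)
    (hi : i ≠ 2) (hwz : w i < z i) (hwz' : w i < z' i) : ({w, z} : Finset ℝ³) = {w, z'} := by
  wlog hzz' : z i ≤ z' i generalizing z z'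
  · exact (this hz' hz hwz' hwz (le_of_not_ge hzz')).symm
  obtain ⟨hwΔ, hw₂⟩ := T.mem_stdSimplex_of_mem_bottomEdges hz (mem_insert_self w {z})
  obtain ⟨hzΔ, hz₂⟩ := T.mem_stdSimplex_of_mem_bottomEdges hz (v := z) (by simp)
  obtain ⟨hz'Δ, hz'₂⟩ := T.mem_stdSimplex_of_mem_bottomEdges hz' (v := z') (by simp)
  have hzseg := mem_segment_of_apply_two_eq_zero hwΔ hzΔ hz'Δ hw₂ hz₂ hz'₂ hi hwz.le hzz'
  refine T.eq_of_mem_convexHull_bottomEdges hz hz' (p := w) (q := z) (fun h => by simp [h] at hwz)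
    (subset_convexHull ℝ _ (by simp)) (subset_convexHull ℝ _ (by simp))
    (subset_convexHull ℝ _ (by simp)) ?_
  rwa [coe_pair, convexHull_pair]

theorem card_filter_mem_bottomEdges_lt (hw : w ∈ T.vertices) (hw₂ : w 2 = 0) (hi : i ≠ 2) :
    #{τ ∈ T.bottomEdges | w ∈ τ ∧ ∃ z ∈ τ, w i < z i} = if w i < 1 then 1 else 0 := by
  split_ifs with hwi
  · obtain ⟨z, hwz, hz⟩ := T.exists_pair_mem_bottomEdges hw hw₂ hi hwi
    refine card_eq_one.2 ⟨{w, z}, ext fun τ => ⟨fun h => ?_, fun h => ?_⟩⟩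
    · obtain ⟨hτ, hwτ, z', hz'τ, hwz'⟩ := mem_filter.1 h
      obtain ⟨z'', -, rfl⟩ := exists_eq_pair_of_mem (T.card_of_mem_bottomEdges hτ) hwτ
      obtain rfl : z' = z'' := by
        rcases mem_insert.1 hz'τ with rfl | h
        · exact absurd hwz' (lt_irrefl _)
        · exact mem_singleton.1 h
      exact mem_singleton.2 (T.pair_eq_of_lt hτ hz hi hwz' hwz)
    · rw [mem_singleton.1 h]
      exact mem_filter.2 ⟨hz, by simp, z, by simp, hwz⟩
  · refine card_eq_zero.2 (filter_eq_empty_iff.2 fun τ hτ ⟨_, z, hzτ, hwz⟩ => hwi ?_)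
    have := (mem_Icc_of_mem_stdSimplex (T.mem_stdSimplex_of_mem_bottomEdges hτ hzτ).1 i).2
    linarith

theorem card_filter_mem_bottomEdges (hw : w ∈ T.vertices) (hw₂ : w 2 = 0) :
    #{τ ∈ T.bottomEdges | w ∈ τ} = (if w 0 < 1 then 1 else 0) + (if w 1 < 1 then 1 else 0) := by
  obtain ⟨σ, hσ, hwσ⟩ := mem_biUnion.1 hw
  have hw₁ := apply_zero_add_apply_one (T.mem_stdSimplex hσ hwσ) hw₂
  have hother : ∀ τ ∈ T.bottomEdges, ∀ z ∈ τ, z ≠ w → z 0 + z 1 = 1 ∧ z 0 ≠ w 0 := by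
    intro τ hτ z hz hzw
    obtain ⟨hzΔ, hz₂⟩ := T.mem_stdSimplex_of_mem_bottomEdges hτ hz
    exact ⟨apply_zero_add_apply_one hzΔ hz₂, fun h => hzw
      (eq_of_apply_eq_of_apply_two_eq_zero hzΔ (T.mem_stdSimplex hσ hwσ) hz₂ hw₂ (by decide) h)⟩
  rw [← T.card_filter_mem_bottomEdges_lt hw hw₂ (i := 0) (by decide),
    ← T.card_filter_mem_bottomEdges_lt hw hw₂ (i := 1) (by decide), ← card_union_of_disjoint,
    ← filter_or]
  · refine congrArg card (filter_congr fun τ hτ => ⟨fun hwτ => ?_, by tauto⟩)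
    obtain ⟨z, hzw, rfl⟩ := exists_eq_pair_of_mem (T.card_of_mem_bottomEdges hτ) hwτ
    obtain ⟨hz₁, hz₀⟩ := hother _ hτ z (by simp) hzw
    rcases hz₀.lt_or_gt with h | h
    · exact .inr ⟨hwτ, z, by simp, by linarith⟩
    · exact .inl ⟨hwτ, z, by simp, h⟩
  · refine disjoint_filter.2 fun τ hτ ⟨hwτ, z, hzτ, hz⟩ ⟨_, z', hz'τ, hz'⟩ => ?_
    obtain ⟨z'', hz''w, rfl⟩ := exists_eq_pair_of_mem (T.card_of_mem_bottomEdges hτ) hwτ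
    have hz'' : ∀ y ∈ ({w, z''} : Finset ℝ³), w ≠ y → y = z'' := by simp +contextual
    rw [hz'' z hzτ (fun h => by simp [← h] at hz)] at hz
    rw [hz'' z' hz'τ (fun h => by simp [← h] at hz')] at hz'
    linarith [(hother _ hτ z'' (by simp) hz''w).1]

theorem odd_card_filter_subset_iff (ℓ : ℝ³ → Fin 3) (hσ : σ ∈ T.facets) :
    Odd #{τ ∈ {τ ∈ T.edges | τ.image ℓ = {0, 1}} | τ ⊆ σ} ↔ σ.image ℓ = univ := by
  rw [filter_comm, T.filter_edges_subset hσ,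
    odd_card_filter_powersetCard_two_image_iff (T.card_eq σ hσ)]

end Triangulation

namespace IsSperner

variable {N : ℕ} {T : Triangulation N} {ℓ : (Fin N → ℝ) → Fin N} {w : Fin N → ℝ}

theorem label_ne_of_apply_eq_zero (hℓ : IsSperner T ℓ) (hw : w ∈ T.vertices) {i : Fin N}
    (hwi : w i = 0) : ℓ w ≠ i :=
  fun h => hℓ w hw (h ▸ hwi)

theorem label_vtx (hℓ : IsSperner T ℓ) (i : Fin N) : ℓ (vtx N i) = i := by
  by_contra h
  exact hℓ _ (T.vtx_mem_vertices i) (by simp [vtx, h])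

end IsSperner

namespace IsSperner

variable {T : Triangulation 3} {ℓ : ℝ³ → Fin 3} {σ τ : Finset ℝ³} {w : ℝ³}

theorem odd_card_superset_iff (hℓ : IsSperner T ℓ) (hτ : τ ∈ T.edges)
    (hτℓ : τ.image ℓ = {0, 1}) :
    Odd #{σ ∈ T.facets | τ ⊆ σ} ↔ τ ∈ T.bottomEdges := by
  obtain ⟨⟨σ, hσ, hτσ⟩, hτ₂⟩ := (T.mem_edges).1 hτ
  obtain ⟨a, b, hab, rfl⟩ := card_eq_two.1 hτ₂
  have hlabel : ∀ j ∈ ({0, 1} : Finset (Fin 3)), ¬ (a j = 0 ∧ b j = 0) := by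
    rintro j hj ⟨ha, hb⟩
    obtain ⟨v, hv, rfl⟩ := mem_image.1 (hτℓ ▸ hj)
    simp only [mem_insert, mem_singleton] at hv
    rcases hv with rfl | rfl
    exacts [hℓ.label_ne_of_apply_eq_zero (T.mem_vertices hσ (hτσ (by simp))) ha rfl,
      hℓ.label_ne_of_apply_eq_zero (T.mem_vertices hσ (hτσ (by simp))) hb rfl]
  by_cases hb : ∀ v ∈ ({a, b} : Finset ℝ³), v 2 = 0
  · rw [T.card_filter_superset_of_apply_eq_zero hσ hab hτσ (hb a (by simp)) (hb b (by simp))]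
    exact ⟨fun _ => T.mem_bottomEdges.2 ⟨hτ, hb⟩, fun _ => odd_one⟩
  · have hint : ∀ i, a i ≠ 0 ∨ b i ≠ 0 := by
      intro i
      rw [← not_and_or]
      rcases (by omega : i = 0 ∨ i = 1 ∨ i = 2) with rfl | rfl | rfl
      · exact hlabel 0 (by simp)
      · exact hlabel 1 (by simp)
      · exact fun h => hb (by simpa using h)
    rw [T.card_filter_superset_of_apply_ne_zero hσ hab hτσ hint]
    exact ⟨fun h => absurd h (by decide), fun h => absurd (T.mem_bottomEdges.1 h).2 hb⟩

theorem odd_card_filter_mem_iff (hℓ : IsSperner T ℓ) (hτ : τ ∈ T.bottomEdges) :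
    Odd #{w ∈ T.vertices | ℓ w = 0 ∧ w ∈ τ} ↔ τ.image ℓ = {0, 1} := by
  obtain ⟨⟨σ, hσ, hτσ⟩, hτ₂⟩ := (T.mem_edges).1 (mem_filter.1 hτ).1
  have hvert : ∀ v ∈ τ, v ∈ T.vertices := fun v hv => T.mem_vertices hσ (hτσ hv)
  have hfilter : {w ∈ T.vertices | ℓ w = 0 ∧ w ∈ τ} = {w ∈ τ | ℓ w = 0} := by
    ext w
    simp only [mem_filter]
    exact ⟨fun h => ⟨h.2.2, h.2.1⟩, fun h => ⟨hvert w h.1, h.2, h.1⟩⟩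
  rw [hfilter]
  refine odd_card_filter_eq_zero_iff hτ₂ fun v hv => ?_
  have := hℓ.label_ne_of_apply_eq_zero (hvert v hv) ((T.mem_bottomEdges.1 hτ).2 v hv)
  omega

theorem odd_card_filter_bottomEdges_iff (hℓ : IsSperner T ℓ) (hw : w ∈ T.vertices)
    (hw₀ : ℓ w = 0) : Odd #{τ ∈ T.bottomEdges | w ∈ τ} ↔ w = vtx 3 0 := by
  obtain ⟨σ, hσ, hwσ⟩ := mem_biUnion.1 hw
  have hwΔ := T.mem_stdSimplex hσ hwσ
  by_cases hw₂ : w 2 = 0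
  · have hpos : 0 < w 0 := lt_of_le_of_ne (hwΔ.1 0) (Ne.symm (hw₀ ▸ hℓ w hw))
    have hw₁ := apply_zero_add_apply_one hwΔ hw₂
    rw [T.card_filter_mem_bottomEdges hw hw₂, if_pos (by linarith : w 1 < 1)]
    by_cases h : w 0 < 1
    · simp only [if_pos h]
      exact ⟨fun h' => absurd h' (by decide), fun e => by simp [e, vtx] at h⟩
    · simp only [if_neg h]
      exact ⟨fun _ => eq_vtx_of_apply_eq_one hwΔ (by linarith [(mem_Icc_of_mem_stdSimplex hwΔ 0).2]),
        fun _ => odd_one⟩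
  · rw [card_eq_zero.2 (filter_eq_empty_iff.2 fun τ hτ hwτ =>
      hw₂ (T.mem_stdSimplex_of_mem_bottomEdges hτ hwτ).2)]
    exact ⟨fun h => absurd h (by decide), fun e => by simp [e, vtx] at hw₂⟩

end IsSperner

/-- Strong Sperner's lemma for the triangle: the number of small triangles
exhibiting all three labels is odd. -/
theorem sperner_triangle_odd (T : Triangulation 3) (ℓ : (Fin 3 → ℝ) → Fin 3)
    (hℓ : IsSperner T ℓ) :
    Odd ((T.facets.filter
      (fun σ => σ.image ℓ = (Finset.univ : Finset (Fin 3)))).card) := by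
  set doors := {τ ∈ T.edges | τ.image ℓ = {0, 1}}
  set zeros := {w ∈ T.vertices | ℓ w = 0}
  have hfacets : ∀ σ ∈ T.facets,
      Odd #(doors.bipartiteAbove (fun σ τ => τ ⊆ σ) σ) ↔ σ.image ℓ = univ :=
    fun σ hσ => T.odd_card_filter_subset_iff ℓ hσ
  have hdoors : ∀ τ ∈ doors,
      Odd #(T.facets.bipartiteBelow (fun σ τ => τ ⊆ σ) τ) ↔ τ ∈ T.bottomEdges :=
    fun τ hτ => hℓ.odd_card_superset_iff (mem_filter.1 hτ).1 (mem_filter.1 hτ).2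
  have hbottom : ∀ τ ∈ T.bottomEdges,
      Odd #(zeros.bipartiteAbove (fun τ w => w ∈ τ) τ) ↔ τ ∈ doors := fun τ hτ => by
    rw [bipartiteAbove, filter_filter, hℓ.odd_card_filter_mem_iff hτ]
    exact ⟨fun h => mem_filter.2 ⟨(T.mem_bottomEdges.1 hτ).1, h⟩, fun h => (mem_filter.1 h).2⟩
  have hzeros : ∀ w ∈ zeros,
      Odd #(T.bottomEdges.bipartiteBelow (fun τ w => w ∈ τ) w) ↔ w = vtx 3 0 :=
    fun w hw => hℓ.odd_card_filter_bottomEdges_iff (mem_filter.1 hw).1 (mem_filter.1 hw).2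
  rw [← filter_congr hfacets, odd_card_odd_bipartiteAbove_iff, filter_congr hdoors,
    filter_mem_eq_inter, inter_comm, ← filter_mem_eq_inter, ← filter_congr hbottom,
    odd_card_odd_bipartiteAbove_iff, filter_congr hzeros, filter_eq',
    if_pos (mem_filter.2 ⟨T.vtx_mem_vertices 0, hℓ.label_vtx 0⟩)]
  exact odd_one
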